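/- For each d > 2 let X_n^{(d)} ⊂ ℝ^d be the 2^{d−1}-point design of maximum resolution at the points (±1/2, …, ±1/2) (even number of negative coordinates), covering the cube [−1,1]^d. For γ ∈ [0,1) let r_{1−γ}(d) denote the smallest r ≥ 0 such that vol({x ∈ [−1,1]^d : dist(x, X_n^{(d)}) ≤ r}) ≥ (1−γ)·2^d, so that r_1(d) = CR(X_n^{(d)}). Then for every fixed γ ∈ (0,1), the ratio r_{1−γ}(d)/r_1(d) → 1/√3 as d → ∞. -/

import Mathlib

open Set MeasureTheory Filter

open Classical in
/-- The `2^{d-1}` design of maximum resolution: the points of `{-1/2, 1/2}^d` whose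
coordinates contain an even number of entries equal to `-1/2`. -/
noncomputable def maxResDesign (d : ℕ) : Set (EuclideanSpace ℝ (Fin d)) :=
  {y | (∀ i, y i = 1/2 ∨ y i = -(1/2)) ∧
    Even (Finset.univ.filter (fun i : Fin d => y i = -(1/2))).card}

/-- The cube `[-1,1]^d` in `ℝ^d`. -/
def bigCube (d : ℕ) : Set (EuclideanSpace ℝ (Fin d)) :=
  {x | ∀ i, x i ∈ Set.Icc (-1 : ℝ) 1}

/-- `r_{1-γ}(d)`: the smallest `r ≥ 0` such that the union of closed balls of radius `r`
centered at the points of the `2^{d-1}` design of maximum resolution covers at least a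
`(1-γ)` proportion of the volume `2^d` of the cube `[-1,1]^d`.  In particular `r_1(d)`
(the case `γ = 0`) is the covering radius `CR(X_n^{(d)})`. -/
noncomputable def weakCoverRadius (γ : ℝ) (d : ℕ) : ℝ :=
  sInf {r : ℝ | 0 ≤ r ∧
    ENNReal.ofReal ((1 - γ) * 2 ^ d) ≤
      volume {x ∈ bigCube d | Metric.infDist x (maxResDesign d) ≤ r}}

/-!
Write `S(x) = ∑ᵢ (|xᵢ| - 1/2)²` for the squared distance from `x` to the grid `{±1/2}^d`.
Every point of the design lies on the grid, so `S(x) ≤ dist(x, X_n)²`; conversely, rounding `x`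
to the grid and flipping one coordinate if the parity is wrong shows `dist(x, X_n)² ≤ S(x) + 2`
on the cube. For a uniform point of the cube, `S` is a sum of `d` independent terms with mean
`1/12` and variance at most `1/64`, so by Chebyshev `S/d → 1/12` in probability, and hence
`r_{1-γ}(d)² / d → 1/12`. Since `S ≤ d/4` on the cube, with near-equality on a corner box of
positive volume, `r_1(d)² / d → 1/4`. The ratio therefore tends to `√(1/12) / √(1/4) = 1/√3`.
-/

open ProbabilityTheory

noncomputable def sqDistHalf (t : ℝ) : ℝ := (|t| - 1/2) ^ 2

noncomputable def sqDistGrid {ι : Type*} [Fintype ι] (x : ι → ℝ) : ℝ := ∑ i, sqDistHalf (x i)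

@[fun_prop]
lemma continuous_sqDistHalf : Continuous sqDistHalf := by
  unfold sqDistHalf; fun_prop

lemma sqDistHalf_mem_Icc {t : ℝ} (ht : t ∈ Icc (-1 : ℝ) 1) : sqDistHalf t ∈ Icc 0 (1/4) := by
  have := abs_le.2 ht
  constructor <;> unfold sqDistHalf <;> nlinarith [abs_nonneg t]

lemma sqDistHalf_le_sq_sub {t u : ℝ} (hu : |u| = 1/2) : sqDistHalf t ≤ (t - u) ^ 2 := by
  rw [sqDistHalf, ← hu, ← sq_abs (t - u)]
  exact sq_le_sq' (by linarith [abs_sub_abs_le_abs_sub u t, abs_sub_comm u t])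
    (abs_sub_abs_le_abs_sub t u)

lemma sq_sub_le_sqDistHalf_add_two {t u : ℝ} (ht : |t| ≤ 1) (hu : |u| = 1/2) :
    (t - u) ^ 2 ≤ sqDistHalf t + 2 := by
  have htu : -(t * u) ≤ |t| * |u| := by rw [← abs_mul]; exact neg_le_abs _
  rw [hu] at htu
  unfold sqDistHalf
  nlinarith [sq_abs t, sq_abs u]

section Design

open Classical in
lemma prod_two_mul_eq_neg_one_pow {ι : Type*} [Fintype ι] {y : ι → ℝ}
    (hy : ∀ i, y i = 1/2 ∨ y i = -(1/2)) :
    ∏ i, 2 * y i = (-1) ^ (Finset.univ.filter (fun i => y i = -(1/2))).card := by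
  have h : ∀ i, 2 * y i = if y i = -(1/2) then -1 else 1 := fun i => by
    rcases hy i with h | h <;> rw [h] <;> norm_num
  simp_rw [h]
  rw [Finset.prod_ite, Finset.prod_const, Finset.prod_const_one, mul_one]

variable {d : ℕ}

lemma mem_maxResDesign_iff {y : EuclideanSpace ℝ (Fin d)} (hy : ∀ i, |y i| = 1/2) :
    y ∈ maxResDesign d ↔ ∏ i, 2 * y i = 1 := by
  have hy' : ∀ i, y i = 1/2 ∨ y i = -(1/2) := fun i => (abs_eq (by norm_num)).1 (hy i)
  rw [prod_two_mul_eq_neg_one_pow hy', neg_one_pow_eq_one_iff_even (by norm_num)]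
  exact and_iff_right hy'

lemma abs_eq_half_of_mem_maxResDesign {y : EuclideanSpace ℝ (Fin d)} (hy : y ∈ maxResDesign d)
    (i : Fin d) : |y i| = 1/2 :=
  (abs_eq (by norm_num)).2 (hy.1 i)

lemma maxResDesign_nonempty (d : ℕ) : (maxResDesign d).Nonempty :=
  ⟨WithLp.toLp 2 fun _ => 1/2, (mem_maxResDesign_iff fun _ => by norm_num).2 (by simp)⟩

lemma sqDistGrid_le_dist_sq (x : EuclideanSpace ℝ (Fin d)) {y : EuclideanSpace ℝ (Fin d)}
    (hy : y ∈ maxResDesign d) : sqDistGrid x.ofLp ≤ dist x y ^ 2 := by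
  rw [EuclideanSpace.dist_eq, Real.sq_sqrt (by positivity)]
  exact Finset.sum_le_sum fun i _ => by
    rw [Real.dist_eq, sq_abs]; exact sqDistHalf_le_sq_sub (abs_eq_half_of_mem_maxResDesign hy i)

lemma sqDistGrid_le_infDist_sq (x : EuclideanSpace ℝ (Fin d)) :
    sqDistGrid x.ofLp ≤ Metric.infDist x (maxResDesign d) ^ 2 := by
  refine (Real.sqrt_le_iff.1 ((Metric.le_infDist (maxResDesign_nonempty d)).2 fun y hy => ?_)).2
  exact Real.sqrt_le_iff.2 ⟨dist_nonneg, sqDistGrid_le_dist_sq x hy⟩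

/-- Round every coordinate of `x` to the nearer of `±1/2` and multiply the first one by the
parity `c = ±1` of the result; only that coordinate costs more than `sqDistHalf`. -/
lemma exists_mem_maxResDesign_dist_sq_le (hd : 0 < d) {x : EuclideanSpace ℝ (Fin d)}
    (hx : x ∈ bigCube d) : ∃ y ∈ maxResDesign d, dist x y ^ 2 ≤ sqDistGrid x.ofLp + 2 := by
  let b : Fin d → ℝ := fun i => if 0 ≤ x i then 1/2 else -(1/2)
  have hb : ∀ i, b i = 1/2 ∨ b i = -(1/2) := fun i => by by_cases h : 0 ≤ x i <;> simp [b, h]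
  have hxb : ∀ i, (x i - b i) ^ 2 = sqDistHalf (x i) := fun i => by
    by_cases h : 0 ≤ x i
    · simp [b, h, sqDistHalf, abs_of_nonneg h]
    · simp [b, h, sqDistHalf, abs_of_neg (not_le.1 h)]; ring
  let c := ∏ i, 2 * b i
  have hc : |c| = 1 := by
    simp only [c, prod_two_mul_eq_neg_one_pow hb, abs_pow, abs_neg, abs_one, one_pow]
  let i₀ : Fin d := ⟨0, hd⟩
  let y : EuclideanSpace ℝ (Fin d) := WithLp.toLp 2 fun i => (if i = i₀ then c else 1) * b i
  have hy : ∀ i, |y i| = 1/2 := fun i => by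
    rw [abs_mul, (abs_eq (by norm_num)).2 (hb i)]
    split_ifs <;> simp [hc]
  refine ⟨y, (mem_maxResDesign_iff hy).2 ?_, ?_⟩
  · calc ∏ i, 2 * y i = (∏ i, if i = i₀ then c else 1) * c := by
          rw [← Finset.prod_mul_distrib]; congr 1 with i; simp only [y]; ring
      _ = 1 := by
          rw [Finset.prod_ite_eq', if_pos (Finset.mem_univ _), ← sq, ← sq_abs, hc, one_pow]
  · rw [EuclideanSpace.dist_eq, Real.sq_sqrt (by positivity), sqDistGrid,
      ← Finset.add_sum_erase _ _ (Finset.mem_univ i₀),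
      ← Finset.add_sum_erase _ _ (Finset.mem_univ i₀)]
    have h₀ : dist (x i₀) (y i₀) ^ 2 ≤ sqDistHalf (x i₀) + 2 := by
      rw [Real.dist_eq, sq_abs]
      exact sq_sub_le_sqDistHalf_add_two (abs_le.2 (hx i₀)) (hy i₀)
    have hrest : ∀ i ∈ Finset.univ.erase i₀, dist (x i) (y i) ^ 2 = sqDistHalf (x i) :=
      fun i hi => by rw [Real.dist_eq, sq_abs, ← hxb]; simp [y, Finset.ne_of_mem_erase hi]
    rw [Finset.sum_congr rfl hrest]
    linarith

lemma infDist_sq_le_sqDistGrid_add_two (hd : 0 < d) {x : EuclideanSpace ℝ (Fin d)}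
    (hx : x ∈ bigCube d) : Metric.infDist x (maxResDesign d) ^ 2 ≤ sqDistGrid x.ofLp + 2 := by
  obtain ⟨y, hy, hxy⟩ := exists_mem_maxResDesign_dist_sq_le hd hx
  exact (pow_le_pow_left₀ Metric.infDist_nonneg (Metric.infDist_le_dist_of_mem hy) 2).trans hxy

lemma sqDistGrid_le_of_mem_bigCube {x : EuclideanSpace ℝ (Fin d)} (hx : x ∈ bigCube d) :
    sqDistGrid x.ofLp ≤ d / 4 := by
  calc sqDistGrid x.ofLp ≤ ∑ _ : Fin d, (1 / 4 : ℝ) :=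
        Finset.sum_le_sum fun i _ => (sqDistHalf_mem_Icc (hx i)).2
    _ = d / 4 := by simp [div_eq_mul_inv]

end Design

section Concentration

lemma cond_pi_univ_pi {ι : Type*} [Fintype ι] {α : ι → Type*} [∀ i, MeasurableSpace (α i)]
    (μ : ∀ i, Measure (α i)) [∀ i, SigmaFinite (μ i)] {s : ∀ i, Set (α i)}
    (hs : ∀ i, MeasurableSet (s i)) (hs₀ : ∀ i, μ i (s i) ≠ 0) :
    (Measure.pi μ)[|univ.pi s] = Measure.pi fun i => (μ i)[|s i] := by
  refine (Measure.pi_eq fun t ht => ?_).symm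
  rw [cond_apply (MeasurableSet.univ_pi hs), ← Set.pi_inter_distrib, Measure.pi_pi, Measure.pi_pi,
    ENNReal.prod_inv_distrib fun i _ j _ _ => .inl (hs₀ i), ← Finset.prod_mul_distrib]
  exact Finset.prod_congr rfl fun i _ => (cond_apply (hs i) _ _).symm

lemma measure_pi_abs_sum_sub_ge_le {ι α : Type*} [Fintype ι] [Nonempty ι] [MeasurableSpace α]
    {ν : Measure α} [IsProbabilityMeasure ν] {f : α → ℝ} (hf : AEMeasurable f ν) {a b : ℝ}
    (hab : ∀ᵐ t ∂ν, f t ∈ Icc a b) {ε : ℝ} (hε : 0 < ε) :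
    Measure.pi (fun _ : ι => ν)
        {ω | ε * Fintype.card ι ≤ |∑ i, f (ω i) - Fintype.card ι * ∫ t, f t ∂ν|} ≤
      ENNReal.ofReal (((b - a) / 2) ^ 2 / (ε ^ 2 * Fintype.card ι)) := by
  set n : ℝ := (Fintype.card ι : ℝ)
  have hn : 0 < n := Nat.cast_pos.2 Fintype.card_pos
  set X := ∑ i, fun ω : ι → α => f (ω i)
  have hf₂ : MemLp f 2 ν := memLp_of_bounded hab hf.aestronglyMeasurable 2
  have hX : ∀ i : ι, MemLp (fun ω : ι → α => f (ω i)) 2 (Measure.pi fun _ => ν) :=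
    fun i => hf₂.comp_measurePreserving (measurePreserving_eval _ i)
  have hmean : ∫ ω, X ω ∂(Measure.pi fun _ => ν) = n * ∫ t, f t ∂ν := by
    simp only [X, Finset.sum_apply]
    rw [integral_finsetSum _ fun i _ => (hX i).integrable one_le_two]
    simp_rw [integral_comp_eval (μ := fun _ => ν) hf.aestronglyMeasurable, Finset.sum_const,
      nsmul_eq_mul, Finset.card_univ, n]
  have hvar : Var[X; Measure.pi fun _ => ν] ≤ n * ((b - a) / 2) ^ 2 := by
    rw [variance_sum_pi fun _ => hf₂, Finset.sum_const, nsmul_eq_mul]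
    exact mul_le_mul_of_nonneg_left (variance_le_sq_of_bounded hab hf) hn.le
  calc _ = Measure.pi (fun _ : ι => ν)
        {ω | ε * n ≤ |X ω - ∫ ω, X ω ∂(Measure.pi fun _ => ν)|} := by
        rw [hmean]; simp only [X, Finset.sum_apply]
    _ ≤ ENNReal.ofReal (Var[X; Measure.pi fun _ => ν] / (ε * n) ^ 2) :=
        meas_ge_le_variance_div_sq (memLp_finsetSum' _ fun i _ => hX i) (mul_pos hε hn)
    _ ≤ _ := by
        refine ENNReal.ofReal_le_ofReal ?_
        calc _ ≤ n * ((b - a) / 2) ^ 2 / (ε * n) ^ 2 := by gcongr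
          _ = _ := by field_simp

instance : IsProbabilityMeasure (volume[|Icc (-1 : ℝ) 1]) :=
  cond_isProbabilityMeasure_of_finite (by simp) (by simp)

lemma integral_sqDistHalf_Icc : ∫ t in Icc (-1 : ℝ) 1, sqDistHalf t = 1/6 := by
  rw [integral_Icc_eq_integral_Ioc, ← intervalIntegral.integral_of_le (by norm_num),
    ← intervalIntegral.integral_add_adjacent_intervals (b := 0)
      (continuous_sqDistHalf.intervalIntegrable _ _) (continuous_sqDistHalf.intervalIntegrable _ _)]
  have hneg : ∫ t in (-1 : ℝ)..0, sqDistHalf t = ∫ t in (-1 : ℝ)..0, (t + 1/2) ^ 2 :=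
    intervalIntegral.integral_congr fun t ht => by
      rw [Set.uIcc_of_le (by norm_num)] at ht
      rw [sqDistHalf, abs_of_nonpos ht.2]; ring
  have hpos : ∫ t in (0 : ℝ)..1, sqDistHalf t = ∫ t in (0 : ℝ)..1, (t - 1/2) ^ 2 :=
    intervalIntegral.integral_congr fun t ht => by
      rw [Set.uIcc_of_le (by norm_num)] at ht
      rw [sqDistHalf, abs_of_nonneg ht.1]
  rw [hneg, hpos, intervalIntegral.integral_comp_add_right (fun t => t ^ 2),
    intervalIntegral.integral_comp_sub_right (fun t => t ^ 2), integral_pow, integral_pow]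
  norm_num

lemma integral_sqDistHalf_cond_Icc : ∫ t, sqDistHalf t ∂(volume[|Icc (-1 : ℝ) 1]) = 1/12 := by
  rw [ProbabilityTheory.cond, integral_smul_measure, integral_sqDistHalf_Icc, Real.volume_Icc]
  norm_num

variable {d : ℕ}

lemma volume_sep_bigCube {A : Set (Fin d → ℝ)} (hA : MeasurableSet A) :
    volume {x ∈ bigCube d | x.ofLp ∈ A} =
      2 ^ d * Measure.pi (fun _ => volume[|Icc (-1 : ℝ) 1]) A := by
  have hcube : MeasurableSet (univ.pi fun _ : Fin d => Icc (-1 : ℝ) 1) :=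
    .univ_pi fun _ => measurableSet_Icc
  have : {x ∈ bigCube d | x.ofLp ∈ A} = WithLp.ofLp ⁻¹' (univ.pi (fun _ => Icc (-1) 1) ∩ A) := by
    ext x
    simp only [bigCube, Set.mem_ofPred_eq, Set.mem_preimage, Set.mem_inter_iff, Set.mem_univ_pi]
  rw [this, (PiLp.volume_preserving_ofLp _).measure_preimage (hcube.inter hA).nullMeasurableSet,
    ← cond_mul_eq_inter' hcube (by rw [volume_pi_pi]; simp), volume_pi,
    cond_pi_univ_pi _ (fun _ => measurableSet_Icc) (fun _ => by simp), Measure.pi_pi]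
  norm_num [Real.volume_Icc, mul_comm]

lemma volume_bigCube (d : ℕ) : volume (bigCube d) = 2 ^ d := by
  simpa using volume_sep_bigCube (d := d) MeasurableSet.univ

lemma volume_abs_sqDistGrid_sub_ge_le (hd : 0 < d) {ε : ℝ} (hε : 0 < ε) :
    volume {x ∈ bigCube d | ε * d ≤ |sqDistGrid x.ofLp - d / 12|} ≤
      ENNReal.ofReal (2 ^ d / (64 * ε ^ 2 * d)) := by
  have : Nonempty (Fin d) := Fin.pos_iff_nonempty.1 hd
  have hA : MeasurableSet {ω : Fin d → ℝ | ε * d ≤ |sqDistGrid ω - d / 12|} :=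
    measurableSet_le measurable_const (by unfold sqDistGrid; fun_prop)
  have hbound : ∀ᵐ t ∂(volume[|Icc (-1 : ℝ) 1]), sqDistHalf t ∈ Icc 0 (1/4) :=
    (ae_cond_mem measurableSet_Icc).mono fun t ht => sqDistHalf_mem_Icc ht
  have hfar := measure_pi_abs_sum_sub_ge_le (ι := Fin d)
    continuous_sqDistHalf.aemeasurable hbound hε
  rw [integral_sqDistHalf_cond_Icc, Fintype.card_fin, mul_one_div] at hfar
  calc _ = 2 ^ d * _ := volume_sep_bigCube hA
    _ ≤ 2 ^ d * ENNReal.ofReal (1 / (64 * ε ^ 2 * d)) := by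
        gcongr
        exact hfar.trans_eq (by congr 1; ring)
    _ = _ := by
        rw [← ENNReal.ofReal_ofNat 2, ← ENNReal.ofReal_pow zero_le_two,
          ← ENNReal.ofReal_mul (by positivity), mul_one_div]

end Concentration

section CoveringRadius

lemma weakCoverRadius_nonneg (γ : ℝ) (d : ℕ) : 0 ≤ weakCoverRadius γ d :=
  Real.sInf_nonneg fun _ hr => hr.1

lemma ofReal_le_volume_sqDistGrid_le_div_four {γ : ℝ} (hγ : 0 ≤ γ) (d : ℕ) :
    ENNReal.ofReal ((1 - γ) * 2 ^ d) ≤ volume {x ∈ bigCube d | sqDistGrid x.ofLp ≤ d / 4} := by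
  rw [Set.sep_eq_self_iff_mem_true.2 fun _ hx => sqDistGrid_le_of_mem_bigCube hx, volume_bigCube,
    ← ENNReal.ofReal_ofNat 2, ← ENNReal.ofReal_pow zero_le_two]
  exact ENNReal.ofReal_le_ofReal (by nlinarith [pow_pos (two_pos (α := ℝ)) d])

variable {d : ℕ}

lemma ofReal_le_volume_infDist_le_sqrt {γ R : ℝ} (hd : 0 < d) (hR : 0 ≤ R)
    (h : ENNReal.ofReal ((1 - γ) * 2 ^ d) ≤ volume {x ∈ bigCube d | sqDistGrid x.ofLp ≤ R}) :
    ENNReal.ofReal ((1 - γ) * 2 ^ d) ≤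
      volume {x ∈ bigCube d | Metric.infDist x (maxResDesign d) ≤ √(R + 2)} :=
  h.trans <| measure_mono fun _ ⟨hx, hxR⟩ =>
    ⟨hx, Real.le_sqrt Metric.infDist_nonneg (by linarith) |>.2 <|
      (infDist_sq_le_sqDistGrid_add_two hd hx).trans (by linarith)⟩

lemma weakCoverRadius_sq_le {γ R : ℝ} (hd : 0 < d) (hR : 0 ≤ R)
    (h : ENNReal.ofReal ((1 - γ) * 2 ^ d) ≤ volume {x ∈ bigCube d | sqDistGrid x.ofLp ≤ R}) :
    weakCoverRadius γ d ^ 2 ≤ R + 2 :=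
  (Real.le_sqrt (weakCoverRadius_nonneg γ d) (by linarith)).1 <|
    csInf_le ⟨0, fun _ hr => hr.1⟩ ⟨Real.sqrt_nonneg _, ofReal_le_volume_infDist_le_sqrt hd hR h⟩

lemma le_weakCoverRadius_sq {γ R : ℝ} (hγ : 0 ≤ γ) (hd : 0 < d)
    (h : ∀ r, 0 ≤ r → r ^ 2 < R →
      volume {x ∈ bigCube d | Metric.infDist x (maxResDesign d) ≤ r} <
        ENNReal.ofReal ((1 - γ) * 2 ^ d)) :
    R ≤ weakCoverRadius γ d ^ 2 := by
  by_contra! hlt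
  have hlt' : weakCoverRadius γ d < √R := (Real.lt_sqrt (weakCoverRadius_nonneg γ d)).2 hlt
  obtain ⟨r, ⟨hr₀, hr⟩, hrR⟩ := exists_lt_of_csInf_lt
    (by exact ⟨_, Real.sqrt_nonneg _, ofReal_le_volume_infDist_le_sqrt hd (by positivity)
      (ofReal_le_volume_sqDistGrid_le_div_four hγ d)⟩) hlt'
  exact (h r hr₀ ((Real.lt_sqrt hr₀).1 hrR)).not_ge hr

/-- A small box at the corner `(1, …, 1)` has positive volume and stays at squared distance
more than `r²` from the design. -/
lemma le_weakCoverRadius_zero_sq (hd : 0 < d) : d / 4 ≤ weakCoverRadius 0 d ^ 2 := by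
  refine le_weakCoverRadius_sq le_rfl hd fun r hr₀ hr => ?_
  have hdpos : (0 : ℝ) < d := Nat.cast_pos.2 hd
  obtain ⟨δ, hδ, hδ₂, hrδ⟩ : ∃ δ : ℝ, 0 < δ ∧ δ ≤ 1/2 ∧ r ^ 2 < d * (1/2 - δ) ^ 2 := by
    have hq : r ^ 2 / d < 1/4 := by rw [div_lt_iff₀ hdpos]; linarith
    refine ⟨(1/4 - r ^ 2 / d) / 2, by linarith, by linarith [div_nonneg (sq_nonneg r) hdpos.le], ?_⟩
    rw [← div_lt_iff₀' hdpos]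
    nlinarith [sq_nonneg ((1/4 - r ^ 2 / d) / 2)]
  let C : Set (EuclideanSpace ℝ (Fin d)) := WithLp.ofLp ⁻¹' univ.pi fun _ => Icc (1 - δ) 1
  have hbox : MeasurableSet (univ.pi fun _ : Fin d => Icc (1 - δ) 1) :=
    .univ_pi fun _ => measurableSet_Icc
  have hCmeas : MeasurableSet C := hbox.preimage (PiLp.volume_preserving_ofLp _).measurable
  have hC : volume C = ENNReal.ofReal δ ^ d := by
    rw [(PiLp.volume_preserving_ofLp _).measure_preimage hbox.nullMeasurableSet, volume_pi_pi]
    simp [Real.volume_Icc]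
  have hCcube : C ⊆ bigCube d := fun x hx i => ⟨by linarith [(hx i trivial).1], (hx i trivial).2⟩
  have hCfar : ∀ x ∈ C, d * (1/2 - δ) ^ 2 ≤ sqDistGrid x.ofLp := fun x hx => by
    calc (d : ℝ) * (1/2 - δ) ^ 2 = ∑ _ : Fin d, (1/2 - δ) ^ 2 := by simp
      _ ≤ sqDistGrid x.ofLp := Finset.sum_le_sum fun i _ => by
        obtain ⟨hi₁, hi₂⟩ := hx i trivial
        rw [sqDistHalf, abs_of_nonneg (by linarith)]
        exact pow_le_pow_left₀ (by linarith) (by linarith) 2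
  calc volume {x ∈ bigCube d | Metric.infDist x (maxResDesign d) ≤ r}
      ≤ volume (bigCube d \ C) :=
        measure_mono fun x ⟨hx, hxr⟩ => ⟨hx, fun hxC => by
          have := sqDistGrid_le_infDist_sq x
          nlinarith [hCfar x hxC, Metric.infDist_nonneg (x := x) (s := maxResDesign d)]⟩
    _ = 2 ^ d - ENNReal.ofReal δ ^ d := by
        rw [measure_sdiff hCcube hCmeas.nullMeasurableSet (by simp [hC]), volume_bigCube, hC]
    _ < 2 ^ d := ENNReal.sub_lt_self (by simp) (by simp) (by simp [hδ])
    _ = ENNReal.ofReal ((1 - 0) * 2 ^ d) := by simp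

lemma one_twelfth_sub_mul_le_weakCoverRadius_sq {γ ε : ℝ} (hγ : 0 ≤ γ) (hd : 0 < d)
    (hε : 0 < ε) (h : 1 / (64 * ε ^ 2 * d) < 1 - γ) :
    (1/12 - ε) * d ≤ weakCoverRadius γ d ^ 2 := by
  refine le_weakCoverRadius_sq hγ hd fun r hr₀ hr => ?_
  calc volume {x ∈ bigCube d | Metric.infDist x (maxResDesign d) ≤ r}
      ≤ volume {x ∈ bigCube d | ε * d ≤ |sqDistGrid x.ofLp - d / 12|} :=
        measure_mono fun x ⟨hx, hxr⟩ => ⟨hx, by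
          have := (sqDistGrid_le_infDist_sq x).trans
            (pow_le_pow_left₀ Metric.infDist_nonneg hxr 2)
          rw [abs_sub_comm]
          exact le_abs.2 (.inl (by linarith))⟩
    _ ≤ ENNReal.ofReal (2 ^ d / (64 * ε ^ 2 * d)) := volume_abs_sqDistGrid_sub_ge_le hd hε
    _ < ENNReal.ofReal ((1 - γ) * 2 ^ d) := by
        refine ENNReal.ofReal_lt_ofReal_iff'.2
          ⟨?_, mul_pos (by linarith [show 0 < 1 / (64 * ε ^ 2 * d) by positivity]) (by positivity)⟩
        rw [div_eq_mul_one_div, mul_comm]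
        exact mul_lt_mul_of_pos_right h (by positivity)

lemma weakCoverRadius_sq_le_one_twelfth_add_mul {γ ε : ℝ} (hd : 0 < d) (hε : 0 < ε)
    (h : 1 / (64 * ε ^ 2 * d) ≤ γ) : weakCoverRadius γ d ^ 2 ≤ (1/12 + ε) * d + 2 := by
  refine weakCoverRadius_sq_le hd (by positivity) ?_
  have hcover : bigCube d ⊆ {x ∈ bigCube d | sqDistGrid x.ofLp ≤ (1/12 + ε) * d} ∪
      {x ∈ bigCube d | ε * d ≤ |sqDistGrid x.ofLp - d / 12|} := fun x hx => by
    by_cases hS : sqDistGrid x.ofLp ≤ (1/12 + ε) * d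
    · exact .inl ⟨hx, hS⟩
    · exact .inr ⟨hx, le_abs.2 (.inl (by linarith))⟩
  calc ENNReal.ofReal ((1 - γ) * 2 ^ d) ≤ ENNReal.ofReal (2 ^ d - 2 ^ d / (64 * ε ^ 2 * d)) := by
        refine ENNReal.ofReal_le_ofReal ?_
        rw [div_eq_mul_one_div]
        nlinarith [pow_pos (two_pos (α := ℝ)) d]
    _ = 2 ^ d - ENNReal.ofReal (2 ^ d / (64 * ε ^ 2 * d)) := by
        rw [ENNReal.ofReal_sub _ (by positivity)]; simp
    _ ≤ volume {x ∈ bigCube d | sqDistGrid x.ofLp ≤ (1/12 + ε) * d} := by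
        rw [tsub_le_iff_right, ← volume_bigCube]
        exact (measure_mono hcover).trans <| (measure_union_le _ _).trans <|
          add_le_add_right (volume_abs_sqDistGrid_sub_ge_le hd hε) _

end CoveringRadius

lemma tendsto_weakCoverRadius_zero_sq_div :
    Tendsto (fun d : ℕ => weakCoverRadius 0 d ^ 2 / d) atTop (nhds (1/4)) := by
  have hupper : Tendsto (fun d : ℕ => 1/4 + (2 : ℝ) / d) atTop (nhds (1/4)) := by
    simpa using tendsto_const_nhds.add (tendsto_const_div_atTop_nhds_zero_nat (2 : ℝ))
  refine tendsto_of_tendsto_of_tendsto_of_le_of_le' tendsto_const_nhds hupper ?_ ?_ <;>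
    filter_upwards [eventually_gt_atTop 0] with d hd <;>
    have hdpos : (0 : ℝ) < d := Nat.cast_pos.2 hd
  · rw [le_div_iff₀ hdpos]
    linarith [le_weakCoverRadius_zero_sq hd]
  · rw [div_le_iff₀ hdpos, add_mul, div_mul_cancel₀ _ hdpos.ne']
    linarith [weakCoverRadius_sq_le hd (by positivity)
      (ofReal_le_volume_sqDistGrid_le_div_four le_rfl d)]

lemma tendsto_weakCoverRadius_sq_div {γ : ℝ} (hγ : γ ∈ Ioo (0 : ℝ) 1) :
    Tendsto (fun d : ℕ => weakCoverRadius γ d ^ 2 / d) atTop (nhds (1/12)) := by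
  have hsmall {c : ℝ} (hc : 0 < c) (K : ℝ) : ∀ᶠ d : ℕ in atTop, K / d < c :=
    (tendsto_const_div_atTop_nhds_zero_nat K).eventually (gt_mem_nhds hc)
  refine tendsto_order.2 ⟨fun a ha => ?_, fun b hb => ?_⟩
  · set ε := (1/12 - a) / 2 with hε
    filter_upwards [eventually_gt_atTop 0, hsmall (sub_pos.2 hγ.2) (1 / (64 * ε ^ 2))]
      with d hd hγd
    rw [div_div] at hγd
    have hdpos : (0 : ℝ) < d := Nat.cast_pos.2 hd
    rw [lt_div_iff₀ hdpos]
    nlinarith [one_twelfth_sub_mul_le_weakCoverRadius_sq hγ.1.le hd (by linarith) hγd]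
  · set ε := (b - 1/12) / 2 with hε
    filter_upwards [eventually_gt_atTop 0, hsmall hγ.1 (1 / (64 * ε ^ 2)),
      hsmall (show 0 < ε by linarith) 2] with d hd hγd htwo
    rw [div_div] at hγd
    have hdpos : (0 : ℝ) < d := Nat.cast_pos.2 hd
    rw [div_lt_iff₀ hdpos] at htwo ⊢
    nlinarith [weakCoverRadius_sq_le_one_twelfth_add_mul hd (by linarith) hγd.le]

/-- For every fixed `γ ∈ (0,1)`, the ratio `r_{1-γ}(d) / r_1(d)` of the `(1-γ)`-covering
radius to the full covering radius of `[-1,1]^d` for the `2^{d-1}` design of maximum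
resolution tends to `1/√3` as `d → ∞`. -/
theorem weakCoverRadius_ratio_tendsto (γ : ℝ) (hγ : γ ∈ Set.Ioo (0:ℝ) 1) :
    Tendsto (fun d : ℕ => weakCoverRadius γ d / weakCoverRadius 0 d) atTop
      (nhds (1 / Real.sqrt 3)) := by
  have hlim : √(1/12) / √(1/4) = 1 / √3 := by
    rw [← Real.sqrt_div (by norm_num), one_div √3, ← Real.sqrt_inv]; norm_num
  rw [← hlim]
  refine ((tendsto_weakCoverRadius_sq_div hγ).sqrt.div tendsto_weakCoverRadius_zero_sq_div.sqrt
    (by positivity)).congr' ?_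
  filter_upwards [eventually_gt_atTop 0] with d hd
  have hsqrt : ∀ c, √(weakCoverRadius c d ^ 2 / d) = weakCoverRadius c d / √d := fun c => by
    rw [Real.sqrt_div (sq_nonneg _), Real.sqrt_sq (weakCoverRadius_nonneg c d)]
  rw [Pi.div_apply, hsqrt, hsqrt,
    div_div_div_cancel_right₀ (Real.sqrt_ne_zero'.2 (Nat.cast_pos.2 hd))]
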